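/- arXiv:2309.09154 — 3 statements merged into one kernel-verified Lean document; each statement's English description precedes it below -/
import Mathlib

section
/- Let f be a piecewise contracting interval map on X and suppose D ⊂ X̃. If A ⊂ X is a non-empty f-pseudo-invariant set, then A ∩ X̃ is a non-empty f-invariant set (i.e. A ∩ X̃ ≠ ∅ and f(A ∩ X̃) ⊂ A ∩ X̃). -/
open Set Filter Metric Topology

/-- A piecewise contracting interval map (PCIM) on the compact interval `X = [a,b]`:
there are `N ≥ 1` pairwise disjoint nonempty open (relative to `X`) subintervals
whose closures cover `X`, and `f` contracts with rate `lam ∈ (0,1)` on each piece. -/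
structure PCIM where
  a : ℝ
  b : ℝ
  hab : a < b
  N : ℕ
  hN : 1 ≤ N
  f : ℝ → ℝ
  lam : ℝ
  hlam₀ : 0 < lam
  hlam₁ : lam < 1
  piece : Fin N → Set ℝ
  piece_nonempty : ∀ i, (piece i).Nonempty
  piece_interval : ∀ i, ∃ c d : ℝ, piece i = Set.Ioo c d ∩ Set.Icc a b
  piece_disjoint : ∀ i j, i ≠ j → Disjoint (piece i) (piece j)
  cover : Set.Icc a b = ⋃ i, closure (piece i)
  mapsTo : Set.MapsTo f (Set.Icc a b) (Set.Icc a b)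
  contract : ∀ i, ∀ x ∈ piece i, ∀ y ∈ piece i, |f x - f y| ≤ lam * |x - y|

namespace PCIM

variable (P : PCIM)

/-- The underlying compact interval `X`. -/
def X : Set ℝ := Set.Icc P.a P.b

/-- `X* = ⋃ i, X_i`, the union of the contraction pieces. -/
def Xstar : Set ℝ := ⋃ i, P.piece i

/-- `Δ = X \ X*`, the set of boundaries of the contraction pieces. -/
def Delta : Set ℝ := P.X \ P.Xstar

/-- `X̃ = ⋂_{j ≥ 0} f⁻ʲ(X*)`, the points all of whose iterates are well defined. -/
def Xtilde : Set ℝ := ⋂ j : ℕ, (P.f^[j]) ⁻¹' P.Xstar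

/-- `D`: the set of one-sided limits of `f` at the points of `Δ`. -/
def D : Set ℝ :=
  {L | ∃ c ∈ P.Delta,
    ((𝓝[P.X ∩ Set.Iio c] c).NeBot ∧ Filter.Tendsto P.f (𝓝[P.X ∩ Set.Iio c] c) (𝓝 L)) ∨
    ((𝓝[P.X ∩ Set.Ioi c] c).NeBot ∧ Filter.Tendsto P.f (𝓝[P.X ∩ Set.Ioi c] c) (𝓝 L))}

/-- A set `A` is `f`-pseudo-invariant if for every `x ∈ A` at least one of the
one-sided limits of `f` at `x` belongs to `A`. -/
def PseudoInvariant (A : Set ℝ) : Prop :=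
  ∀ x ∈ A,
    (∃ L ∈ A, (𝓝[P.X ∩ Set.Iio x] x).NeBot ∧
      Filter.Tendsto P.f (𝓝[P.X ∩ Set.Iio x] x) (𝓝 L)) ∨
    (∃ L ∈ A, (𝓝[P.X ∩ Set.Ioi x] x).NeBot ∧
      Filter.Tendsto P.f (𝓝[P.X ∩ Set.Ioi x] x) (𝓝 L))

/-- `f` is piecewise monotonic: strictly monotone on each contraction piece. -/
def PiecewiseMonotonic : Prop :=
  ∀ i, StrictMonoOn P.f (P.piece i) ∨ StrictAntiOn P.f (P.piece i)

/-- `f` satisfies the separation property: it is piecewise monotonic and the closures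
of the images of distinct pieces are disjoint. -/
def SeparationProperty : Prop :=
  P.PiecewiseMonotonic ∧
    ∀ i j, i ≠ j → closure (P.f '' P.piece i) ∩ closure (P.f '' P.piece j) = ∅

/-- The iterates `Λ_n` defining the attractor: `Λ_0 = X`,
`Λ_{n+1} = cl (f (Λ_n \ Δ))`. -/
def LambdaIter : (P : PCIM) → ℕ → Set ℝ
  | Q, 0 => Q.X
  | Q, n + 1 => closure (Q.f '' (LambdaIter Q n \ Q.Delta))

/-- The attractor `Λ = ⋂_{n ≥ 1} Λ_n`. -/
def Lambda : Set ℝ := ⋂ n : ℕ, P.LambdaIter (n + 1)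

/-- The atom associated to the word `w = [i₁, …, iₙ]`:
`A_{i₁…iₙ} = F_{iₙ} ∘ ⋯ ∘ F_{i₁}(X)` where `F_i(A) = cl (f (A ∩ X_i))`. -/
def atomOf (w : List (Fin P.N)) : Set ℝ :=
  w.foldl (fun A i => closure (P.f '' (A ∩ P.piece i))) P.X

/-- `𝒜_n`: the set of (nonempty) atoms of generation `n`. -/
def atoms (n : ℕ) : Set (Set ℝ) :=
  {A | ∃ w : List (Fin P.N), w.length = n ∧ P.atomOf w = A ∧ A.Nonempty}

/-- `θ` is the itinerary of `x`: `f^t(x) ∈ X_{θ_t}` for all `t`. -/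
def IsItinerary (x : ℝ) (θ : ℕ → Fin P.N) : Prop :=
  ∀ t : ℕ, P.f^[t] x ∈ P.piece (θ t)

/-- The word `θ_t θ_{t+1} … θ_{t+n-1}` of length `n` of the sequence `θ`. -/
def word (θ : ℕ → Fin P.N) (t n : ℕ) : List (Fin P.N) :=
  (List.range n).map fun k => θ (t + k)

/-- `L_n(θ)`: the set of words of length `n` occurring in `θ`. -/
def lang (θ : ℕ → Fin P.N) (n : ℕ) : Set (List (Fin P.N)) :=
  {w | ∃ t : ℕ, w = P.word θ t n}

/-- The complexity function `p_θ(n) = #L_n(θ)`. -/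
noncomputable def complexity (θ : ℕ → Fin P.N) (n : ℕ) : ℕ := (P.lang θ n).ncard

/-- The forward orbit of `x` under `f`. -/
def orbit (x : ℝ) : Set ℝ := {y | ∃ k : ℕ, P.f^[k] x = y}

/-- The ω-limit set of `x` under `f`. -/
def omegaLimitSet (x : ℝ) : Set ℝ :=
  ⋂ n : ℕ, closure {y | ∃ m : ℕ, n ≤ m ∧ P.f^[m] x = y}

/-- A compact pseudo-invariant set `A` is `X̃`-minimal if the orbit of every point
of `A ∩ X̃` is dense in `A`. -/
def XtildeMinimal (A : Set ℝ) : Prop :=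
  IsCompact A ∧ P.PseudoInvariant A ∧ ∀ x ∈ A ∩ P.Xtilde, A ⊆ closure (P.orbit x)

/-- A periodic orbit contained in `X̃`. -/
def IsPeriodicOrbit (A : Set ℝ) : Prop :=
  ∃ x ∈ P.Xtilde, ∃ p : ℕ, 1 ≤ p ∧ P.f^[p] x = x ∧ A = P.orbit x

end PCIM

/-- A Cantor set: nonempty, compact, perfect and totally disconnected. -/
def IsCantorSet (A : Set ℝ) : Prop :=
  A.Nonempty ∧ IsCompact A ∧ Perfect A ∧ IsTotallyDisconnected A


/-! A point of `A ∩ X*` is a continuity point of `f`, so pseudo-invariance forces `f x ∈ A`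
there. Hence the orbit of any `x ∈ A` stays in `A` until it first leaves `X*`; if it never
does, `x ∈ A ∩ X̃`, and otherwise it lands on a point of `A ∩ Δ`, one of whose one-sided
limits lies in `A ∩ D ⊆ A ∩ X̃`. -/

namespace PCIM

variable (P : PCIM)

theorem lipschitzOnWith_piece (i : Fin P.N) :
    LipschitzOnWith (Real.toNNReal P.lam) P.f (P.piece i) :=
  LipschitzOnWith.of_dist_le_mul fun x hx y hy => by
    rw [Real.dist_eq, Real.dist_eq, Real.coe_toNNReal _ P.hlam₀.le]
    exact P.contract i x hx y hy

theorem continuousWithinAt_X_of_mem_Xstar {x : ℝ} (hx : x ∈ P.Xstar) :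
    ContinuousWithinAt P.f P.X x := by
  obtain ⟨i, hi⟩ := mem_iUnion.mp hx
  obtain ⟨c, d, hcd⟩ := P.piece_interval i
  have hf := (P.lipschitzOnWith_piece i).continuousOn x hi
  rw [hcd, inter_comm] at hf hi
  exact (continuousWithinAt_inter (Ioo_mem_nhds hi.2.1 hi.2.2)).mp hf

theorem Xtilde_subset_Xstar : P.Xtilde ⊆ P.Xstar :=
  iInter_subset_of_subset 0 subset_rfl

theorem mapsTo_Xtilde : MapsTo P.f P.Xtilde P.Xtilde := fun x hx =>
  mem_iInter.mpr fun j => by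
    simpa only [mem_preimage, Function.iterate_succ_apply] using mem_iInter.mp hx (j + 1)

namespace PseudoInvariant

variable {P} {A : Set ℝ}

theorem apply_mem_of_mem_Xstar (hA : P.PseudoInvariant A) {x : ℝ} (hxA : x ∈ A)
    (hx : x ∈ P.Xstar) : P.f x ∈ A := by
  have hf := P.continuousWithinAt_X_of_mem_Xstar hx
  rcases hA x hxA with ⟨L, hLA, hne, hL⟩ | ⟨L, hLA, hne, hL⟩ <;>
    rwa [tendsto_nhds_unique' hne hL (hf.mono inter_subset_left)] at hLA

theorem mapsTo_inter_Xtilde (hA : P.PseudoInvariant A) :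
    MapsTo P.f (A ∩ P.Xtilde) (A ∩ P.Xtilde) := fun _ hx =>
  ⟨hA.apply_mem_of_mem_Xstar hx.1 (P.Xtilde_subset_Xstar hx.2), P.mapsTo_Xtilde hx.2⟩

theorem inter_Delta_nonempty_of_notMem_Xtilde (hA : P.PseudoInvariant A) (hAX : A ⊆ P.X)
    {x : ℝ} (hxA : x ∈ A) (hx : x ∉ P.Xtilde) : (A ∩ P.Delta).Nonempty := by
  obtain ⟨j, hj⟩ : ∃ j, P.f^[j] x ∉ P.Xstar := by
    simpa only [Xtilde, mem_iInter, mem_preimage, not_forall] using hx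
  clear hx
  induction j generalizing x with
  | zero => exact ⟨x, hxA, hAX hxA, hj⟩
  | succ j ih =>
    by_cases hxs : x ∈ P.Xstar
    · rw [Function.iterate_succ_apply] at hj
      exact ih (hA.apply_mem_of_mem_Xstar hxA hxs) hj
    · exact ⟨x, hxA, hAX hxA, hxs⟩

theorem inter_D_nonempty (hA : P.PseudoInvariant A) (h : (A ∩ P.Delta).Nonempty) :
    (A ∩ P.D).Nonempty := by
  obtain ⟨c, hcA, hc⟩ := h
  rcases hA c hcA with ⟨L, hLA, hL⟩ | ⟨L, hLA, hL⟩
  · exact ⟨L, hLA, c, hc, Or.inl hL⟩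
  · exact ⟨L, hLA, c, hc, Or.inr hL⟩

end PseudoInvariant

end PCIM

/-- If `D ⊆ X̃` and `A ⊆ X` is a nonempty `f`-pseudo-invariant set,
then `A ∩ X̃` is nonempty and `f`-invariant. -/
theorem pseudoInvariant_inter_Xtilde_nonempty_invariant (P : PCIM) (A : Set ℝ)
    (hD : P.D ⊆ P.Xtilde) (hAX : A ⊆ P.X) (hAne : A.Nonempty)
    (hA : P.PseudoInvariant A) :
    (A ∩ P.Xtilde).Nonempty ∧ Set.MapsTo P.f (A ∩ P.Xtilde) (A ∩ P.Xtilde) := by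
  refine ⟨?_, hA.mapsTo_inter_Xtilde⟩
  obtain ⟨x, hxA⟩ := hAne
  by_cases hx : x ∈ P.Xtilde
  · exact ⟨x, hxA, hx⟩
  obtain ⟨L, hLA, hLD⟩ :=
    hA.inter_D_nonempty (hA.inter_Delta_nonempty_of_notMem_Xtilde hAX hxA hx)
  exact ⟨L, hLA, hD hLD⟩
end

section
/- Let f be a piecewise contracting interval map on X. If f is piecewise monotonic, then the set X̃ = ∩_{j≥0} f^{-j}(X*) is dense in X. -/
open Set Filter Metric Topology

/-!
A point of `X` leaves `X̃` only if some iterate lands in the finite set `Δ` of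
piece endpoints. Since `f` is injective on each piece, preimages of countable sets under `f`
(within `X`) are countable, so `X \ X̃` is countable; and removing a countable set from a
non-degenerate interval leaves a dense subset.
-/

theorem Icc_subset_closure_diff_of_countable {a b : ℝ} (hab : a < b) {C : Set ℝ}
    (hC : C.Countable) : Icc a b ⊆ closure (Icc a b \ C) :=
  calc Icc a b = closure (Ioo a b) := (closure_Ioo hab.ne).symm
    _ ⊆ closure (Ioo a b ∩ Cᶜ) :=
      closure_minimal ((hC.dense_compl ℝ).open_subset_closure_inter isOpen_Ioo) isClosed_closure
    _ ⊆ closure (Icc a b \ C) := closure_mono (inter_subset_inter_left _ Ioo_subset_Icc_self)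

namespace PCIM

variable (P : PCIM)

theorem delta_finite : P.Delta.Finite := by
  choose c d hcd using P.piece_interval
  refine (finite_iUnion fun i => toFinite {c i, d i}).subset ?_
  rintro x ⟨hxX, hx⟩
  obtain ⟨i, hi⟩ := mem_iUnion.1 (P.cover ▸ hxX : x ∈ ⋃ i, closure (P.piece i))
  have hxi : x ∉ P.piece i := fun h => hx (mem_iUnion.2 ⟨i, h⟩)
  rw [hcd i] at hi hxi
  have hxIcc : x ∈ Icc (c i) (d i) :=
    closure_minimal Ioo_subset_Icc_self isClosed_Icc (closure_mono inter_subset_left hi)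
  have hxIoo : x ∉ Ioo (c i) (d i) := fun h => hxi ⟨h, hxX⟩
  have hendpoint : x ∈ Icc (c i) (d i) \ Ioo (c i) (d i) := ⟨hxIcc, hxIoo⟩
  rw [Icc_sdiff_Ioo_same (hxIcc.1.trans hxIcc.2)] at hendpoint
  exact mem_iUnion.2 ⟨i, hendpoint⟩

theorem countable_preimage_inter_X (hmono : P.PiecewiseMonotonic) {S : Set ℝ}
    (hS : S.Countable) : (P.f ⁻¹' S ∩ P.X).Countable := by
  have hsplit : P.f ⁻¹' S ∩ P.X ⊆ P.Delta ∪ ⋃ i, P.f ⁻¹' S ∩ P.piece i := by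
    rintro x ⟨hxS, hxX⟩
    by_cases hx : x ∈ P.Xstar
    · obtain ⟨i, hi⟩ := mem_iUnion.1 hx
      exact Or.inr (mem_iUnion.2 ⟨i, hxS, hi⟩)
    · exact Or.inl ⟨hxX, hx⟩
  refine (P.delta_finite.countable.union (countable_iUnion fun i => ?_)).mono hsplit
  have hinj : InjOn P.f (P.piece i) := (hmono i).elim StrictMonoOn.injOn StrictAntiOn.injOn
  exact MapsTo.countable_of_injOn (f := P.f) (fun x hx => hx.1) (hinj.mono inter_subset_right) hS

theorem countable_iterate_preimage_inter_X (hmono : P.PiecewiseMonotonic) {S : Set ℝ}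
    (hS : S.Countable) (j : ℕ) : ((P.f^[j]) ⁻¹' S ∩ P.X).Countable := by
  induction j with
  | zero => exact hS.mono inter_subset_left
  | succ j ih =>
    refine (P.countable_preimage_inter_X hmono ih).mono ?_
    rintro x ⟨hx, hxX⟩
    exact ⟨⟨by rwa [mem_preimage, ← Function.iterate_succ_apply], P.mapsTo hxX⟩, hxX⟩

theorem countable_X_diff_Xtilde (hmono : P.PiecewiseMonotonic) :
    (P.X \ P.Xtilde).Countable := by
  refine (countable_iUnion
    (P.countable_iterate_preimage_inter_X hmono P.delta_finite.countable)).mono ?_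
  rintro x ⟨hxX, hx⟩
  obtain ⟨j, hj⟩ : ∃ j, P.f^[j] x ∉ P.Xstar := by simpa [Xtilde] using hx
  exact mem_iUnion.2 ⟨j, ⟨P.mapsTo.iterate j hxX, hj⟩, hxX⟩

end PCIM

/-- If `f` is piecewise monotonic, then `X̃` is dense in `X`. -/
theorem Xtilde_dense_of_piecewiseMonotonic (P : PCIM)
    (hmono : P.PiecewiseMonotonic) :
    P.X ⊆ closure P.Xtilde :=
  calc P.X ⊆ closure (P.X \ (P.X \ P.Xtilde)) :=
        Icc_subset_closure_diff_of_countable P.hab (P.countable_X_diff_Xtilde hmono)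
    _ ⊆ closure P.Xtilde := closure_mono (sdiff_sdiff_right_self.trans_le inter_subset_right)
end

section
/- Let f be a piecewise contracting interval map on X satisfying the separation property, with N contraction pieces. Let x ∈ X̃ and let θ be its itinerary. Then there exist m₀ ≥ 1, α ∈ {0,…,N−1} and β ∈ {1,…,1+m₀(N−1−α)} such that the complexity function satisfies p_θ(n) = αn + β for all n ≥ m₀. -/
open Set Filter Metric Topology

/-!
Under the separation property the atoms of generation `n` are pairwise disjoint closed
intervals, and `f^[t + n] x` lies in the atom of the word `θ_t … θ_{t+n-1}`. The extensions of
a word `u` of length `n` in `L_{n+1}(θ)` are the pieces visited right after `u`; between two such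
pieces the atom of `u` contains the right endpoint of the left one, and by disjointness that
endpoint belongs to no other atom. So `p(n + 1) - p(n) = σ(n)`, the number of pieces cut in this
way at level `n`, with `σ(n) ≤ N - 1` since the rightmost piece is never cut. A cut at level
`n + 1` is also one at level `n` (drop the first letter), so `σ` is non-increasing, hence
eventually equal to some `α`, and `p(n) = 1 + σ(0) + ⋯ + σ(n - 1)` gives the bounds on `β`.
-/

open Bornology

section MonotoneLimits

variable {g : ℝ → ℝ} {I : Set ℝ}

theorem lt_of_tendsto_of_strictMonoOn (hI : I.OrdConnected) (hg : StrictMonoOn g I)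
    {s t : ℕ → ℝ} (hs : ∀ k, s k ∈ I) (ht : ∀ k, t k ∈ I) {a b L L' : ℝ}
    (hsa : Tendsto s atTop (𝓝 a)) (htb : Tendsto t atTop (𝓝 b)) (hab : a < b)
    (hgs : Tendsto (g ∘ s) atTop (𝓝 L)) (hgt : Tendsto (g ∘ t) atTop (𝓝 L')) : L < L' := by
  obtain ⟨m₁, ham₁, hm₁b⟩ := exists_between hab
  obtain ⟨m₂, hm₁₂, hm₂b⟩ := exists_between hm₁b
  have hs_lt : ∀ᶠ k in atTop, s k < m₁ := hsa.eventually_lt_const ham₁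
  have ht_gt : ∀ᶠ k in atTop, m₂ < t k := htb.eventually_const_lt hm₂b
  obtain ⟨k, hk⟩ := hs_lt.exists
  obtain ⟨l, hl⟩ := ht_gt.exists
  have hm₁ : m₁ ∈ I := hI.out (hs k) (ht l) ⟨hk.le, (hm₁₂.trans hl).le⟩
  have hm₂ : m₂ ∈ I := hI.out (hs k) (ht l) ⟨(hk.trans hm₁₂).le, hl.le⟩
  calc L ≤ g m₁ := le_of_tendsto hgs (hs_lt.mono fun k hk => (hg (hs k) hm₁ hk).le)
    _ < g m₂ := hg hm₁ hm₂ hm₁₂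
    _ ≤ L' := ge_of_tendsto hgt (ht_gt.mono fun k hk => (hg hm₂ (ht k) hk).le)

theorem ne_of_tendsto_of_strictMonoOn_or_strictAntiOn (hI : I.OrdConnected)
    (hg : StrictMonoOn g I ∨ StrictAntiOn g I)
    {s t : ℕ → ℝ} (hs : ∀ k, s k ∈ I) (ht : ∀ k, t k ∈ I) {a b L L' : ℝ}
    (hsa : Tendsto s atTop (𝓝 a)) (htb : Tendsto t atTop (𝓝 b)) (hab : a < b)
    (hgs : Tendsto (g ∘ s) atTop (𝓝 L)) (hgt : Tendsto (g ∘ t) atTop (𝓝 L')) : L ≠ L' := by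
  rcases hg with hg | hg
  · exact (lt_of_tendsto_of_strictMonoOn hI hg hs ht hsa htb hab hgs hgt).ne
  · exact (neg_lt_neg_iff.mp
      (lt_of_tendsto_of_strictMonoOn hI hg.neg hs ht hsa htb hab hgs.neg hgt.neg)).ne'

theorem exists_seq_tendsto_of_mem_closure_image {S : Set ℝ} (hS : IsBounded S) {L : ℝ}
    (hL : L ∈ closure (g '' S)) :
    ∃ s : ℕ → ℝ, (∀ k, s k ∈ S) ∧ ∃ a ∈ closure S,
      Tendsto s atTop (𝓝 a) ∧ Tendsto (g ∘ s) atTop (𝓝 L) := by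
  obtain ⟨u, hu, hul⟩ := mem_closure_iff_seq_limit.mp hL
  choose s hsS hsu using hu
  obtain ⟨a, ha, φ, hφ, hsφ⟩ := tendsto_subseq_of_bounded hS hsS
  refine ⟨s ∘ φ, fun k => hsS (φ k), a, ha, hsφ, ?_⟩
  have hgsφ : g ∘ (s ∘ φ) = u ∘ φ := funext fun k => hsu (φ k)
  rw [hgsφ]
  exact hul.comp hφ.tendsto_atTop

theorem disjoint_closure_image_inter (hI : I.OrdConnected)
    (hg : StrictMonoOn g I ∨ StrictAntiOn g I) {A B : Set ℝ} (hA : IsClosed A) (hB : IsClosed B)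
    (hAb : IsBounded A) (hBb : IsBounded B) (hAB : Disjoint A B) :
    Disjoint (closure (g '' (A ∩ I))) (closure (g '' (B ∩ I))) := by
  rw [Set.disjoint_left]
  intro L hLA hLB
  obtain ⟨s, hs, a, ha, hsa, hgs⟩ :=
    exists_seq_tendsto_of_mem_closure_image (hAb.subset inter_subset_left) hLA
  obtain ⟨t, ht, b, hb, htb, hgt⟩ :=
    exists_seq_tendsto_of_mem_closure_image (hBb.subset inter_subset_left) hLB
  have haA : a ∈ A := closure_minimal inter_subset_left hA ha
  have hbB : b ∈ B := closure_minimal inter_subset_left hB hb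
  rcases (hAB.ne_of_mem haA hbB).lt_or_gt with hab | hba
  · exact ne_of_tendsto_of_strictMonoOn_or_strictAntiOn hI hg (fun k => (hs k).2)
      (fun k => (ht k).2) hsa htb hab hgs hgt rfl
  · exact ne_of_tendsto_of_strictMonoOn_or_strictAntiOn hI hg (fun k => (ht k).2)
      (fun k => (hs k).2) htb hsa hba hgt hgs rfl

end MonotoneLimits

theorem exists_eventually_affine_of_antitone_increments {p σ : ℕ → ℕ} {K : ℕ} (hp₀ : p 0 = 1)
    (hp : ∀ n, p (n + 1) = p n + σ n) (hσ : Antitone σ) (hK : ∀ n, σ n ≤ K) :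
    ∃ m₀ α β : ℕ, 1 ≤ m₀ ∧ α ≤ K ∧ 1 ≤ β ∧ β ≤ 1 + m₀ * (K - α) ∧
      ∀ n ≥ m₀, p n = α * n + β := by
  set m := Function.argmin σ
  have hα : ∀ n, σ m ≤ σ n := fun n => Function.argmin_le σ n
  have hαK : σ m ≤ K := hK m
  have hconst : ∀ n ≥ m, σ n = σ m := fun n hn => (hσ hn).antisymm (hα n)
  have hlow : ∀ n, 1 + σ m * n ≤ p n := by
    intro n
    induction n with
    | zero => simp [hp₀]
    | succ n ih => rw [hp, mul_add_one]; linarith [hα n]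
  have hup : ∀ n, p n ≤ 1 + K * n := by
    intro n
    induction n with
    | zero => simp [hp₀]
    | succ n ih => rw [hp, mul_add_one]; linarith [hK n]
  set m₀ := max m 1
  refine ⟨m₀, σ m, p m₀ - σ m * m₀, le_max_right m 1, hαK, by have := hlow m₀; omega, ?_, ?_⟩
  · have := hup m₀
    have := Nat.mul_le_mul_right m₀ hαK
    rw [Nat.mul_sub, mul_comm m₀ K, mul_comm m₀ (σ m)]
    omega
  · intro n hn
    induction n, hn using Nat.le_induction with
    | base => have := hlow m₀; omega
    | succ n hn ih =>
      rw [hp, ih, hconst n (le_of_max_le_left hn)]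
      ring

namespace PCIM

variable (P : PCIM)

theorem piece_subset_X (i : Fin P.N) : P.piece i ⊆ P.X := by
  obtain ⟨c, d, h⟩ := P.piece_interval i
  rw [h]
  exact inter_subset_right

theorem ordConnected_piece (i : Fin P.N) : (P.piece i).OrdConnected := by
  obtain ⟨c, d, h⟩ := P.piece_interval i
  rw [h]
  exact ordConnected_Ioo.inter ordConnected_Icc

theorem piece_nontrivial (i : Fin P.N) : (P.piece i).Nontrivial := by
  obtain ⟨c, d, h⟩ := P.piece_interval i
  obtain ⟨z, hz⟩ := P.piece_nonempty i
  rw [h] at hz ⊢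
  obtain ⟨⟨hcz, hzd⟩, haz, hzb⟩ := hz
  have hlt : max c P.a < min d P.b := by
    simp only [max_lt_iff, lt_min_iff]
    exact ⟨⟨by linarith, by linarith⟩, by linarith, P.hab⟩
  refine (Ioo_infinite hlt).nontrivial.mono fun y ⟨hy₁, hy₂⟩ => ?_
  simp only [max_lt_iff, lt_min_iff] at hy₁ hy₂
  exact ⟨⟨hy₁.1, hy₂.1⟩, hy₁.2.le, hy₂.2.le⟩

theorem continuousOn_piece (i : Fin P.N) : ContinuousOn P.f (P.piece i) :=
  (LipschitzOnWith.of_dist_le_mul (K := ⟨P.lam, P.hlam₀.le⟩) fun x hx y hy => by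
    rw [Real.dist_eq, Real.dist_eq]
    exact P.contract i x hx y hy).continuousOn

-- Pieces are compared through their right endpoints.
noncomputable def pieceSup (i : Fin P.N) : ℝ := sSup (P.piece i)

variable {P}

theorem le_pieceSup {i : Fin P.N} {p : ℝ} (hp : p ∈ P.piece i) : p ≤ P.pieceSup i :=
  le_csSup (bddAbove_Icc.mono (P.piece_subset_X i)) hp

theorem exists_lt_pieceSup (i : Fin P.N) : ∃ p ∈ P.piece i, p < P.pieceSup i := by
  obtain ⟨p, hp, q, hq, hpq⟩ := P.piece_nontrivial i
  rcases hpq.lt_or_gt with h | h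
  · exact ⟨p, hp, h.trans_le (le_pieceSup hq)⟩
  · exact ⟨q, hq, h.trans_le (le_pieceSup hp)⟩

theorem pieceSup_le_of_pieceSup_lt {i j : Fin P.N} (hij : P.pieceSup i < P.pieceSup j) {q : ℝ}
    (hq : q ∈ P.piece j) : P.pieceSup i ≤ q := by
  by_contra! hqi
  obtain ⟨p, hp, hqp⟩ := exists_lt_of_lt_csSup (P.piece_nonempty i) hqi
  obtain ⟨q', hq', hiq'⟩ := exists_lt_of_lt_csSup (P.piece_nonempty j) hij
  have hpj : p ∈ P.piece j :=
    (P.ordConnected_piece j).out hq hq' ⟨hqp.le, (le_pieceSup hp).trans hiq'.le⟩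
  have hne : i ≠ j := by rintro rfl; exact hij.false
  exact Set.disjoint_left.mp (P.piece_disjoint i j hne) hp hpj

theorem pieceSup_injective : Function.Injective P.pieceSup := by
  intro i j hij
  by_contra hne
  obtain ⟨p, hp, hpi⟩ := exists_lt_pieceSup i
  obtain ⟨q, hq, hqj⟩ := exists_lt_pieceSup j
  wlog hpq : p ≤ q generalizing i j p q
  · exact this hij.symm (Ne.symm hne) q hq hqj p hp hpi (le_of_not_ge hpq)
  obtain ⟨p', hp', hqp'⟩ := exists_lt_of_lt_csSup (P.piece_nonempty i) (hij ▸ hqj)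
  have hqi : q ∈ P.piece i := (P.ordConnected_piece i).out hp hp' ⟨hpq, hqp'.le⟩
  exact Set.disjoint_left.mp (P.piece_disjoint i j hne) hqi hq

theorem pieceSup_mem_of_ordConnected {S : Set ℝ} (hS : S.OrdConnected) {i j : Fin P.N}
    (hij : P.pieceSup i < P.pieceSup j) {p q : ℝ} (hp : p ∈ S) (hpi : p ∈ P.piece i)
    (hq : q ∈ S) (hqj : q ∈ P.piece j) : P.pieceSup i ∈ S :=
  hS.out hp hq ⟨le_pieceSup hpi, pieceSup_le_of_pieceSup_lt hij hqj⟩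

variable (P)

theorem atomOf_append_singleton (w : List (Fin P.N)) (i : Fin P.N) :
    P.atomOf (w ++ [i]) = closure (P.f '' (P.atomOf w ∩ P.piece i)) := by
  rw [atomOf, List.foldl_append]
  rfl

theorem isClosed_atomOf (w : List (Fin P.N)) : IsClosed (P.atomOf w) := by
  induction w using List.reverseRecOn with
  | nil => exact isClosed_Icc
  | append_singleton w i _ =>
    rw [atomOf_append_singleton]
    exact isClosed_closure

theorem atomOf_subset_X (w : List (Fin P.N)) : P.atomOf w ⊆ P.X := by
  induction w using List.reverseRecOn with
  | nil => exact subset_rfl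
  | append_singleton w i _ =>
    rw [atomOf_append_singleton]
    refine closure_minimal ?_ isClosed_Icc
    rintro _ ⟨y, hy, rfl⟩
    exact P.mapsTo (P.piece_subset_X i hy.2)

theorem ordConnected_atomOf (w : List (Fin P.N)) : (P.atomOf w).OrdConnected := by
  induction w using List.reverseRecOn with
  | nil => exact ordConnected_Icc
  | append_singleton w i ih =>
    rw [atomOf_append_singleton]
    have hconn : IsPreconnected (P.atomOf w ∩ P.piece i) :=
      (ih.inter (P.ordConnected_piece i)).isPreconnected
    exact (hconn.image _ ((P.continuousOn_piece i).mono inter_subset_right)).closure.ordConnected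

theorem disjoint_atomOf (hsep : P.SeparationProperty) {w w' : List (Fin P.N)}
    (hlen : w.length = w'.length) (hne : w ≠ w') : Disjoint (P.atomOf w) (P.atomOf w') := by
  induction w using List.reverseRecOn generalizing w' with
  | nil => exact absurd (List.length_eq_zero_iff.mp hlen.symm).symm hne
  | append_singleton w i ih =>
    obtain ⟨w', i', rfl⟩ : ∃ v j, w' = v ++ [j] :=
      (w'.eq_nil_or_concat').resolve_left (by rintro rfl; simp at hlen)
    rw [atomOf_append_singleton, atomOf_append_singleton]
    by_cases hii : i = i'
    · subst hii
      have hww : w ≠ w' := by rintro rfl; exact hne rfl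
      have hbdd : ∀ v, IsBounded (P.atomOf v) := fun v =>
        (isBounded_Icc P.a P.b).subset (P.atomOf_subset_X v)
      exact disjoint_closure_image_inter (P.ordConnected_piece i) (hsep.1 i)
        (P.isClosed_atomOf w) (P.isClosed_atomOf w') (hbdd w) (hbdd w')
        (ih (by simpa using hlen) hww)
    · exact (disjoint_iff_inter_eq_empty.mpr (hsep.2 i i' hii)).mono
        (closure_mono (image_mono inter_subset_right))
        (closure_mono (image_mono inter_subset_right))

variable {x : ℝ} {θ : ℕ → Fin P.N}

theorem length_word (θ : ℕ → Fin P.N) (t n : ℕ) : (P.word θ t n).length = n := by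
  simp [word]

theorem word_succ (θ : ℕ → Fin P.N) (t n : ℕ) :
    P.word θ t (n + 1) = P.word θ t n ++ [θ (t + n)] := by
  simp [word, List.range_succ]

theorem word_succ_eq_cons (θ : ℕ → Fin P.N) (t n : ℕ) :
    P.word θ t (n + 1) = θ t :: P.word θ (t + 1) n := by
  simp [word, List.range_succ_eq_map, Function.comp_def, Nat.add_assoc, Nat.add_comm 1]

theorem word_succ_inj {t s n : ℕ} (h : P.word θ t (n + 1) = P.word θ s (n + 1)) :
    P.word θ t n = P.word θ s n ∧ θ (t + n) = θ (s + n) := by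
  rw [word_succ, word_succ] at h
  obtain ⟨hw, hi⟩ := List.append_inj h (by rw [length_word, length_word])
  exact ⟨hw, List.singleton_inj.mp hi⟩

theorem finite_lang (θ : ℕ → Fin P.N) (n : ℕ) : (P.lang θ n).Finite :=
  (List.finite_length_eq (Fin P.N) n).subset fun _ ⟨t, hw⟩ => hw ▸ P.length_word θ t n

theorem complexity_zero (θ : ℕ → Fin P.N) : P.complexity θ 0 = 1 := by
  have hlang : P.lang θ 0 = {[]} := by
    ext w
    exact ⟨fun ⟨_, hw⟩ => hw, fun hw => ⟨0, hw⟩⟩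
  rw [complexity, hlang, ncard_singleton]

theorem iterate_mem_atomOf_word (hθ : P.IsItinerary x θ) (t n : ℕ) :
    P.f^[t + n] x ∈ P.atomOf (P.word θ t n) := by
  induction n with
  | zero => exact P.piece_subset_X _ (hθ t)
  | succ n ih =>
    rw [word_succ, atomOf_append_singleton, ← Nat.add_assoc, Function.iterate_succ_apply']
    exact subset_closure (mem_image_of_mem _ ⟨ih, hθ (t + n)⟩)

def cutPieces (θ : ℕ → Fin P.N) (n : ℕ) : Set (Fin P.N) :=
  {i | ∃ t s, P.word θ s n = P.word θ t n ∧ θ (t + n) = i ∧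
    P.pieceSup i < P.pieceSup (θ (s + n))}

theorem cutPieces_succ_subset (θ : ℕ → Fin P.N) (n : ℕ) :
    P.cutPieces θ (n + 1) ⊆ P.cutPieces θ n := by
  rintro i ⟨t, s, hw, rfl, hlt⟩
  rw [word_succ_eq_cons, word_succ_eq_cons, List.cons.injEq] at hw
  have hshift : ∀ u, u + 1 + n = u + (n + 1) := fun u => by omega
  exact ⟨t + 1, s + 1, hw.2, by rw [hshift], by simpa only [hshift] using hlt⟩

theorem ncard_cutPieces_lt (θ : ℕ → Fin P.N) (n : ℕ) : (P.cutPieces θ n).ncard < P.N := by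
  have : Nonempty (Fin P.N) := ⟨⟨0, P.hN⟩⟩
  obtain ⟨imax, himax⟩ := Finite.exists_max P.pieceSup
  have hmiss : imax ∉ P.cutPieces θ n := fun ⟨_, s, _, hi, hlt⟩ =>
    (hlt.trans_le (himax (θ (s + n)))).false.elim
  simpa using ncard_lt_card (ne_of_mem_of_not_mem' (mem_univ imax) hmiss).symm

def rightmostExtensions (θ : ℕ → Fin P.N) (n : ℕ) : Set (List (Fin P.N)) :=
  {w | ∃ t, w = P.word θ t (n + 1) ∧
    ∀ s, P.word θ s n = P.word θ t n → P.pieceSup (θ (s + n)) ≤ P.pieceSup (θ (t + n))}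

theorem rightmostExtensions_subset_lang (θ : ℕ → Fin P.N) (n : ℕ) :
    P.rightmostExtensions θ n ⊆ P.lang θ (n + 1) :=
  fun _ ⟨t, hw, _⟩ => ⟨t, hw⟩

theorem bijOn_take_rightmostExtensions (θ : ℕ → Fin P.N) (n : ℕ) :
    BijOn (List.take n) (P.rightmostExtensions θ n) (P.lang θ n) := by
  have htake : ∀ t, (P.word θ t (n + 1)).take n = P.word θ t n := fun t => by
    rw [word_succ, List.take_left' (P.length_word θ t n)]
  refine ⟨?_, ?_, ?_⟩
  · rintro _ ⟨t, rfl, _⟩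
    exact ⟨t, htake t⟩
  · rintro _ ⟨t, rfl, ht⟩ _ ⟨t', rfl, ht'⟩ h
    rw [htake, htake] at h
    have hlast : θ (t + n) = θ (t' + n) :=
      pieceSup_injective ((ht t' h.symm).antisymm' (ht' t h))
    rw [word_succ, word_succ, h, hlast]
  · rintro _ ⟨t₀, rfl⟩
    obtain ⟨_, ⟨t, htw, rfl⟩, hmax⟩ := exists_max_image
      {i | ∃ s, P.word θ s n = P.word θ t₀ n ∧ θ (s + n) = i} P.pieceSup (toFinite _)
      ⟨θ (t₀ + n), t₀, rfl, rfl⟩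
    refine ⟨P.word θ t (n + 1), ⟨t, rfl, fun s hs => hmax _ ⟨s, hs.trans htw, rfl⟩⟩, ?_⟩
    rw [htake, htw]

theorem bijOn_getLastD_lang_diff_rightmostExtensions (hsep : P.SeparationProperty)
    (hθ : P.IsItinerary x θ) (n : ℕ) :
    BijOn (fun w => w.getLastD ⟨0, P.hN⟩) (P.lang θ (n + 1) \ P.rightmostExtensions θ n)
      (P.cutPieces θ n) := by
  have hlast : ∀ t, (P.word θ t (n + 1)).getLastD ⟨0, P.hN⟩ = θ (t + n) := fun t => by
    rw [word_succ, List.getLastD_concat]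
  have hcut : ∀ t, P.word θ t (n + 1) ∉ P.rightmostExtensions θ n →
      ∃ s, P.word θ s n = P.word θ t n ∧ P.pieceSup (θ (t + n)) < P.pieceSup (θ (s + n)) :=
    fun t ht => by
      by_contra! hmax
      exact ht ⟨t, rfl, hmax⟩
  have hmem : ∀ t s, P.word θ s n = P.word θ t n →
      P.pieceSup (θ (t + n)) < P.pieceSup (θ (s + n)) →
      P.pieceSup (θ (t + n)) ∈ P.atomOf (P.word θ t n) := fun t s hw hlt =>
    pieceSup_mem_of_ordConnected (P.ordConnected_atomOf _) hlt (P.iterate_mem_atomOf_word hθ t n)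
      (hθ _) (hw ▸ P.iterate_mem_atomOf_word hθ s n) (hθ _)
  refine ⟨?_, ?_, ?_⟩
  · rintro _ ⟨⟨t, rfl⟩, ht⟩
    obtain ⟨s, hw, hlt⟩ := hcut t ht
    exact ⟨t, s, hw, (hlast t).symm, by simpa only [hlast] using hlt⟩
  · rintro _ ⟨⟨t, rfl⟩, ht⟩ _ ⟨⟨t', rfl⟩, ht'⟩ h
    simp only [hlast] at h
    obtain ⟨s, hw, hlt⟩ := hcut t ht
    obtain ⟨s', hw', hlt'⟩ := hcut t' ht'
    have hprefix : P.word θ t n = P.word θ t' n := by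
      by_contra hne
      refine Set.disjoint_left.mp (P.disjoint_atomOf hsep (by rw [length_word, length_word]) hne)
        (hmem t s hw hlt) ?_
      rw [h]
      exact hmem t' s' hw' hlt'
    rw [word_succ, word_succ, hprefix, h]
  · rintro _ ⟨t, s, hw, rfl, hlt⟩
    refine ⟨P.word θ t (n + 1), ⟨⟨t, rfl⟩, ?_⟩, hlast t⟩
    rintro ⟨t', ht', hmax⟩
    obtain ⟨hpre, hlet⟩ := P.word_succ_inj ht'
    rw [hlet] at hlt
    exact (hlt.trans_le (hmax s (hw.trans hpre))).false

theorem complexity_succ (hsep : P.SeparationProperty) (hθ : P.IsItinerary x θ) (n : ℕ) :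
    P.complexity θ (n + 1) = P.complexity θ n + (P.cutPieces θ n).ncard := by
  rw [complexity, complexity,
    ← ncard_sdiff_add_ncard_of_subset (P.rightmostExtensions_subset_lang θ n) (P.finite_lang θ _),
    (P.bijOn_take_rightmostExtensions θ n).ncard_eq,
    (P.bijOn_getLastD_lang_diff_rightmostExtensions hsep hθ n).ncard_eq, add_comm]

end PCIM

theorem complexity_eventually_affine_general (P : PCIM)
    (hsep : P.SeparationProperty) (x : ℝ)
    (θ : ℕ → Fin P.N) (hθ : P.IsItinerary x θ) :
    ∃ (m₀ α β : ℕ), 1 ≤ m₀ ∧ α ≤ P.N - 1 ∧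
      1 ≤ β ∧ β ≤ 1 + m₀ * (P.N - 1 - α) ∧
      ∀ n ≥ m₀, P.complexity θ n = α * n + β := by
  have hcut_antitone : Antitone fun n => (P.cutPieces θ n).ncard :=
    antitone_nat_of_succ_le fun n => ncard_le_ncard (P.cutPieces_succ_subset θ n) (toFinite _)
  refine exists_eventually_affine_of_antitone_increments (P.complexity_zero θ)
    (P.complexity_succ hsep hθ) hcut_antitone fun n => ?_
  have := P.ncard_cutPieces_lt θ n
  omega

/-- Catsigeras–Guiraud–Meyroneinc: under the separation property,
the complexity of the itinerary of any point of `X̃` is eventually affine: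
`p_θ(n) = α n + β` for all `n ≥ m₀`, with `α ∈ {0,…,N-1}` and
`β ∈ {1,…,1 + m₀ (N-1-α)}`. -/
theorem complexity_eventually_affine (P : PCIM)
    (hsep : P.SeparationProperty) (x : ℝ) (hx : x ∈ P.Xtilde)
    (θ : ℕ → Fin P.N) (hθ : P.IsItinerary x θ) :
    ∃ (m₀ α β : ℕ), 1 ≤ m₀ ∧ α ≤ P.N - 1 ∧
      1 ≤ β ∧ β ≤ 1 + m₀ * (P.N - 1 - α) ∧
      ∀ n ≥ m₀, P.complexity θ n = α * n + β :=
  complexity_eventually_affine_general P hsep x θ hθ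
end
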